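/- arXiv:1803.00909 — 10 statements merged into one kernel-verified Lean document; each statement's English description precedes it below -/
import Mathlib

section
/- Let ℓ : ℝ → ℝ be differentiable, non-decreasing, with ℓ'(z) = 0 if and only if z ≤ -z₀ for some z₀ > 0. Suppose (x_i, y_i), i = 1,...,n, with y_i ∈ {-1,1}, are linearly separable: there exists w ∈ ℝ^d with y_i · ⟨w, x_i⟩ > 0 for all i. Let f(x; θ) be a predictor of the form f(x;θ) = f_D(x; θ_D) + a₀ + ∑_{j=1}^M a_j σ(⟨w_j, x⟩), where σ is differentiable with σ'(z) > 0 for all z, and f_D is any function of x not depending on (a₀, a_j, w_j). If θ* is a point where for each j the gradient condition ∑_i ℓ'(-y_i f(x_i;θ*)) · y_i · σ'(⟨w_j*, x_i⟩) · x_i = 0 holds, then ℓ'(-y_i f(x_i; θ*)) = 0 for all i, hence y_i f(x_i; θ*) ≥ z₀ > 0 for all i and the training error is zero. -/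
/-!
Pair the first-order condition of a single hidden unit with the separating direction `w`:
after multiplying by `yᵢ²`, every term `ℓ'(-yᵢ F i) yᵢ σ'(⟨w_j, xᵢ⟩) ⟨w, xᵢ⟩` is nonnegative,
so all of them vanish, and `σ' > 0` leaves `ℓ'(-yᵢ F i) = 0`, i.e. `yᵢ F i ≥ z₀`.
-/

open Finset

section SignAligned

variable {𝕜 E ι : Type*} [Field 𝕜] [LinearOrder 𝕜] [IsStrictOrderedRing 𝕜]
  [AddCommGroup E] [Module 𝕜 E] [Fintype ι]

theorem eq_zero_of_sum_smul_eq_zero_of_separated (φ : E →ₗ[𝕜] 𝕜) {x : ι → E} {y c : ι → 𝕜}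
    (hsep : ∀ i, 0 < y i * φ (x i)) (hc : ∀ i, 0 ≤ c i * y i)
    (hsum : ∑ i, c i • x i = 0) (i : ι) : c i = 0 := by
  have hterm : ∀ i, 0 ≤ c i * φ (x i) := fun i => by
    have hy : 0 < y i * y i := mul_self_pos.mpr (left_ne_zero_of_mul (hsep i).ne')
    refine nonneg_of_mul_nonneg_left ?_ hy
    calc 0 ≤ c i * y i * (y i * φ (x i)) := mul_nonneg (hc i) (hsep i).le
      _ = c i * φ (x i) * (y i * y i) := by ring
  have hzero : ∑ i, c i * φ (x i) = 0 := by
    simpa only [map_sum, map_smul, smul_eq_mul, map_zero] using congrArg φ hsum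
  have hci := (sum_eq_zero_iff_of_nonneg fun i _ => hterm i).mp hzero i (mem_univ i)
  exact (mul_eq_zero.mp hci).resolve_right (right_ne_zero_of_mul (hsep i).ne')

end SignAligned

theorem linearly_separable_gradient_condition_implies_zero_error_general
    (d n M : ℕ) (hM : 0 < M)
    (x : Fin n → Fin d → ℝ) (y : Fin n → ℝ)
    (ℓ : ℝ → ℝ) (z₀ : ℝ)
    (hℓ' : ∀ z : ℝ, 0 ≤ deriv ℓ z)
    (hℓ0 : ∀ z : ℝ, deriv ℓ z = 0 ↔ z ≤ -z₀)
    (σ : ℝ → ℝ) (hσ' : ∀ z : ℝ, 0 < deriv σ z)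
    (w : Fin d → ℝ) (hsep : ∀ i, 0 < y i * ∑ k, w k * x i k)
    (wj : Fin M → Fin d → ℝ)
    (F : Fin n → ℝ)
    (hgrad : ∀ j, ∑ i,
        (deriv ℓ (-(y i) * F i) * y i * deriv σ (∑ k, wj j k * x i k)) • x i
        = (0 : Fin d → ℝ)) :
    ∀ i, deriv ℓ (-(y i) * F i) = 0 ∧ z₀ ≤ y i * F i := by
  intro i
  set j : Fin M := ⟨0, hM⟩
  have hsigned : ∀ i, 0 ≤ deriv ℓ (-(y i) * F i) * y i * deriv σ (∑ k, wj j k * x i k) * y i :=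
    fun i => by
      have := mul_nonneg (mul_nonneg (hℓ' (-(y i) * F i)) (hσ' (∑ k, wj j k * x i k)).le)
        (mul_self_nonneg (y i))
      linarith
  have hcoef := eq_zero_of_sum_smul_eq_zero_of_separated (dotProductBilin ℝ ℝ w) hsep hsigned
    (hgrad j) i
  have hℓi : deriv ℓ (-(y i) * F i) = 0 := by
    simpa [left_ne_zero_of_mul (hsep i).ne', (hσ' _).ne'] using hcoef
  exact ⟨hℓi, by linarith [(hℓ0 _).mp hℓi]⟩

/-- Linearly separable data: at any point where the first-order condition in the
hidden weights holds, all loss derivatives vanish and all margins are at least `z₀`,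
hence the training error is zero. -/
theorem linearly_separable_gradient_condition_implies_zero_error
    (d n M : ℕ) (hM : 0 < M)
    (x : Fin n → Fin d → ℝ) (y : Fin n → ℝ) (hy : ∀ i, y i = 1 ∨ y i = -1)
    (ℓ : ℝ → ℝ) (hℓd : Differentiable ℝ ℓ) (z₀ : ℝ) (hz₀ : 0 < z₀)
    (hℓ' : ∀ z : ℝ, 0 ≤ deriv ℓ z)
    (hℓ0 : ∀ z : ℝ, deriv ℓ z = 0 ↔ z ≤ -z₀)
    (σ : ℝ → ℝ) (hσd : Differentiable ℝ σ) (hσ' : ∀ z : ℝ, 0 < deriv σ z)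
    (w : Fin d → ℝ) (hsep : ∀ i, 0 < y i * ∑ k, w k * x i k)
    (fD : (Fin d → ℝ) → ℝ) (a0 : ℝ) (a : Fin M → ℝ) (wj : Fin M → Fin d → ℝ)
    (F : Fin n → ℝ)
    (hF : ∀ i, F i = fD (x i) + a0 + ∑ j, a j * σ (∑ k, wj j k * x i k))
    (hgrad : ∀ j, ∑ i,
        (deriv ℓ (-(y i) * F i) * y i * deriv σ (∑ k, wj j k * x i k)) • x i
        = (0 : Fin d → ℝ)) :
    ∀ i, deriv ℓ (-(y i) * F i) = 0 ∧ z₀ ≤ y i * F i :=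
  linearly_separable_gradient_condition_implies_zero_error_general d n M hM x y ℓ z₀ hℓ' hℓ0 σ hσ' w
    hsep wj F hgrad
end

section
/- Let ℓ : ℝ → ℝ be differentiable with ℓ'(z) > 0 for all z ∈ ℝ. Suppose (x_i, y_i), i=1,...,n, with y_i ∈ {-1,1}, are linearly separable: there exists w ∈ ℝ^d with y_i ⟨w, x_i⟩ > 0 for all i. Let σ : ℝ → ℝ be differentiable with σ'(z) > 0 for all z. Then for every choice of parameters (a₀, a_1, ..., a_M, w_1, ..., w_M) and every function g : ℝ^d → ℝ, the empirical loss L(θ) = (1/n)∑_i ℓ(-y_i (a₀ + ∑_j a_j σ(⟨w_j, x_i⟩) + g(x_i))) has no critical point in the weights: there is no θ such that ∑_i ℓ'(-y_i f(x_i;θ)) y_i σ'(⟨w_1, x_i⟩) x_i = 0. -/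
/-!
Pairing the gradient with the separating vector `w` turns it into
`∑ i, ℓ'(…) σ'(…) (y i ⟨w, x i⟩)`, a nonempty sum of positive terms, so the gradient is not zero.
-/

open Finset

theorem LinearMap.sum_smul_ne_zero_of_forall_pos_mul_apply {ι R E : Type*} [Fintype ι]
    [Nonempty ι] [CommSemiring R] [PartialOrder R] [IsOrderedCancelAddMonoid R]
    [AddCommMonoid E] [Module R E] (φ : E →ₗ[R] R) {c : ι → R} {x : ι → E}
    (hpos : ∀ i, 0 < c i * φ (x i)) :
    ∑ i, c i • x i ≠ 0 := by
  intro hzero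
  have hφpos : 0 < φ (∑ i, c i • x i) := by
    simpa [map_sum] using sum_pos (fun i _ => hpos i) univ_nonempty
  rw [hzero, map_zero] at hφpos
  exact lt_irrefl 0 hφpos

theorem no_critical_point_positive_derivative_loss_general
    (d n M : ℕ) (hn : 0 < n)
    (x : Fin n → Fin d → ℝ) (y : Fin n → ℝ)
    (ℓ : ℝ → ℝ) (hℓ' : ∀ z : ℝ, 0 < deriv ℓ z)
    (σ : ℝ → ℝ) (hσ' : ∀ z : ℝ, 0 < deriv σ z)
    (w : Fin d → ℝ) (hsep : ∀ i, 0 < y i * ∑ k, w k * x i k)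
    (a0 : ℝ) (a : Fin M → ℝ) (wj : Fin M → Fin d → ℝ)
    (g : (Fin d → ℝ) → ℝ) (j : Fin M) :
    ∑ i, (deriv ℓ (-(y i) * (a0 + (∑ j', a j' * σ (∑ k, wj j' k * x i k)) + g (x i)))
        * y i * deriv σ (∑ k, wj j k * x i k)) • x i ≠ (0 : Fin d → ℝ) := by
  have : Nonempty (Fin n) := ⟨⟨0, hn⟩⟩
  refine (dotProductBilin ℝ ℝ w).sum_smul_ne_zero_of_forall_pos_mul_apply fun i => ?_
  have hprod := mul_pos (mul_pos
    (hℓ' (-(y i) * (a0 + (∑ j', a j' * σ (∑ k, wj j' k * x i k)) + g (x i))))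
    (hσ' (∑ k, wj j k * x i k))) (hsep i)
  exact hprod.trans_eq (by simp only [dotProductBilin_apply_apply, dotProduct]; ring)

/-- For a loss with strictly positive derivative on linearly separable data, the
empirical loss has no critical point in the hidden weights: the gradient condition
with respect to any hidden weight vector never holds. -/
theorem no_critical_point_positive_derivative_loss
    (d n M : ℕ) (hn : 0 < n)
    (x : Fin n → Fin d → ℝ) (y : Fin n → ℝ) (hy : ∀ i, y i = 1 ∨ y i = -1)
    (ℓ : ℝ → ℝ) (hℓd : Differentiable ℝ ℓ) (hℓ' : ∀ z : ℝ, 0 < deriv ℓ z)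
    (σ : ℝ → ℝ) (hσd : Differentiable ℝ σ) (hσ' : ∀ z : ℝ, 0 < deriv σ z)
    (w : Fin d → ℝ) (hsep : ∀ i, 0 < y i * ∑ k, w k * x i k)
    (a0 : ℝ) (a : Fin M → ℝ) (wj : Fin M → Fin d → ℝ)
    (g : (Fin d → ℝ) → ℝ) (j : Fin M) :
    ∑ i, (deriv ℓ (-(y i) * (a0 + (∑ j', a j' * σ (∑ k, wj j' k * x i k)) + g (x i)))
        * y i * deriv σ (∑ k, wj j k * x i k)) • x i ≠ (0 : Fin d → ℝ) :=
  no_critical_point_positive_derivative_loss_general d n M hn x y ℓ hℓ' σ hσ' w hsep a0 a wj g j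
end

section
/- Let ℓ : ℝ → ℝ be differentiable with ℓ'(z) > 0 for all z ∈ ℝ. Let f : ℝ^d × Θ → ℝ be any predictor of the form f(x;θ) = a₀ + ∑_{j=1}^M a_j φ_j(x;θ') (affine in the output-layer weights a₀,a_1,...,a_M). Suppose the dataset (x_i,y_i)_{i=1}^n contains at least one sample with y_i = 1 and at least one with y_i = -1. If θ* is a critical point of the empirical loss L(θ) = (1/n)∑_i ℓ(-y_i f(x_i;θ)) (in particular, the partial derivatives with respect to a₀ and each a_j vanish), then the training error at θ* is strictly positive: there exists i with y_i f(x_i;θ*) ≤ 0. -/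
/-! The loss gradient in the output weights is orthogonal to the constant feature and to every
`φ j`, hence to the predictor itself, which is a combination of them. Pairing the gradient
with the predictor gives `∑ i, ℓ'(-y i F i) (y i F i) = 0`; if every margin `y i F i` were
positive, every term of this sum would be positive. -/

open Finset

theorem sum_mul_affine_eq_zero_of_orthogonal {ι κ R : Type*} [Fintype ι] [Fintype κ]
    [CommRing R] (c : ι → R) (ψ : κ → ι → R) (a0 : R) (a : κ → R)
    (hc0 : ∑ i, c i = 0) (hc : ∀ j, ∑ i, c i * ψ j i = 0) :
    ∑ i, c i * (a0 + ∑ j, a j * ψ j i) = 0 := calc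
  ∑ i, c i * (a0 + ∑ j, a j * ψ j i)
      = (∑ i, c i) * a0 + ∑ j, a j * ∑ i, c i * ψ j i := by
        simp only [mul_add, sum_add_distrib, sum_mul, mul_sum]
        rw [sum_comm]
        congr 1
        exact sum_congr rfl fun j _ => sum_congr rfl fun i _ => by ring
  _ = 0 := by simp [hc0, hc]

theorem critical_point_of_positive_derivative_loss_has_error_general
    (d n M : ℕ)
    (x : Fin n → Fin d → ℝ) (y : Fin n → ℝ)
    (hpos : ∃ i, y i = 1)
    (ℓ : ℝ → ℝ) (hℓ' : ∀ z : ℝ, 0 < deriv ℓ z)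
    (φ : Fin M → (Fin d → ℝ) → ℝ) (a0 : ℝ) (a : Fin M → ℝ)
    (F : Fin n → ℝ) (hF : ∀ i, F i = a0 + ∑ j, a j * φ j (x i))
    (hca0 : ∑ i, deriv ℓ (-(y i) * F i) * y i = 0)
    (hca : ∀ j, ∑ i, deriv ℓ (-(y i) * F i) * y i * φ j (x i) = 0) :
    ∃ i, y i * F i ≤ 0 := by
  by_contra! hmargin
  have hzero : ∑ i, deriv ℓ (-(y i) * F i) * y i * F i = 0 := by
    have := sum_mul_affine_eq_zero_of_orthogonal (fun i => deriv ℓ (-(y i) * F i) * y i)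
      (fun j i => φ j (x i)) a0 a hca0 hca
    simpa only [← hF] using this
  obtain ⟨i₀, -⟩ := hpos
  have hpositive : 0 < ∑ i, deriv ℓ (-(y i) * F i) * y i * F i :=
    sum_pos (fun i _ => mul_assoc (deriv ℓ _) (y i) (F i) ▸ mul_pos (hℓ' _) (hmargin i))
      ⟨i₀, mem_univ i₀⟩
  exact hpositive.ne' hzero

/-- For a loss with strictly positive derivative and a predictor affine in the output
layer weights, any critical point (vanishing partial derivatives in the output weights)
has strictly positive training error: some sample has non-positive margin. -/
theorem critical_point_of_positive_derivative_loss_has_error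
    (d n M : ℕ)
    (x : Fin n → Fin d → ℝ) (y : Fin n → ℝ) (hy : ∀ i, y i = 1 ∨ y i = -1)
    (hpos : ∃ i, y i = 1) (hneg : ∃ i, y i = -1)
    (ℓ : ℝ → ℝ) (hℓd : Differentiable ℝ ℓ) (hℓ' : ∀ z : ℝ, 0 < deriv ℓ z)
    (φ : Fin M → (Fin d → ℝ) → ℝ) (a0 : ℝ) (a : Fin M → ℝ)
    (F : Fin n → ℝ) (hF : ∀ i, F i = a0 + ∑ j, a j * φ j (x i))
    (hca0 : ∑ i, deriv ℓ (-(y i) * F i) * y i = 0)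
    (hca : ∀ j, ∑ i, deriv ℓ (-(y i) * F i) * y i * φ j (x i) = 0) :
    ∃ i, y i * F i ≤ 0 :=
  critical_point_of_positive_derivative_loss_has_error_general d n M x y hpos ℓ hℓ' φ a0 a F hF hca0
    hca
end

section
/- Let X be a real random variable with P(X = 5/4) = 1/2 and, conditionally on the other half of the mass, X uniform on [0,1]; let Y = 1 when X = 5/4 and Y = -1 when X ∈ [0,1]. For the linear model f(x;a,b) = ax + b, consider the population quadratic loss L(a,b) = E[(1 - Y·f(X;a,b))²]. Then the unique minimizer (a*,b*) of L satisfies P(Y ≠ sgn(a*X + b*)) ≥ 1/16, even though the distribution is linearly separable (Y·(X - 9/8) > 0 almost surely has the same sign pattern achievable by a linear classifier). -/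
open MeasureTheory

/-- The joint distribution of Example 1: with probability 1/2 the sample is `(5/4, 1)`
(positive class), and with probability 1/2 the first coordinate is uniform on `[0,1]`
and the label is `-1`. -/
noncomputable def exampleMeasure : Measure (ℝ × ℝ) :=
  (1 / 2 : ENNReal) • Measure.dirac ((5 / 4 : ℝ), (1 : ℝ)) +
  (1 / 2 : ENNReal) • Measure.map (fun x : ℝ => (x, (-1 : ℝ)))
    (volume.restrict (Set.Icc (0 : ℝ) 1))

/-! Since `Y² = 1`, the loss is `E[(Y - (aX + b))²]`, so its minimizer is the least-squares
line: `a* = Cov(X, Y) / Var(X) = (3/8) / (35/192) = 72/35` and `b* = -a* E[X] = -9/5`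
with `E[X] = 7/8`. Its zero `7/8` cuts off the top eighth of the negative samples,
which have total mass `1/2`. -/

open Set

lemma integral_add_mul_sq_zero_one (c d : ℝ) :
    ∫ x in (0 : ℝ)..1, (c + d * x) ^ 2 = c ^ 2 + c * d + d ^ 2 / 3 := by
  have hint : ∀ f : ℝ → ℝ, Continuous f → IntervalIntegrable f volume 0 1 :=
    fun f hf => hf.intervalIntegrable 0 1
  have hexpand : (fun x : ℝ => (c + d * x) ^ 2) =
      fun x => c ^ 2 + 2 * c * d * x + d ^ 2 * x ^ 2 := by
    ext x; ring
  rw [hexpand, intervalIntegral.integral_add (hint _ (by fun_prop)) (hint _ (by fun_prop)),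
    intervalIntegral.integral_add (hint _ (by fun_prop)) (hint _ (by fun_prop)),
    intervalIntegral.integral_const, intervalIntegral.integral_const_mul,
    intervalIntegral.integral_const_mul, integral_id, integral_pow]
  norm_num
  ring

lemma integral_exampleMeasure {f : ℝ × ℝ → ℝ} (hf : Continuous f) :
    ∫ p, f p ∂exampleMeasure = 2⁻¹ * f (5 / 4, 1) + 2⁻¹ * ∫ x in (0 : ℝ)..1, f (x, -1) := by
  have hembed : Continuous fun x : ℝ => (x, (-1 : ℝ)) := by fun_prop
  have hint_dirac : Integrable f (Measure.dirac ((5 / 4 : ℝ), (1 : ℝ))) :=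
    integrable_dirac enorm_lt_top
  have hint_unif : Integrable f
      (Measure.map (fun x : ℝ => (x, (-1 : ℝ))) (volume.restrict (Icc (0 : ℝ) 1))) := by
    rw [integrable_map_measure hf.aestronglyMeasurable hembed.aemeasurable]
    exact (hf.comp hembed).integrableOn_Icc
  rw [exampleMeasure, integral_add_measure (hint_dirac.smul_measure (by simp))
      (hint_unif.smul_measure (by simp)), integral_smul_measure, integral_smul_measure,
    integral_dirac, integral_map hembed.aemeasurable hf.aestronglyMeasurable,
    integral_Icc_eq_integral_Ioc, ← intervalIntegral.integral_of_le zero_le_one]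
  norm_num

lemma inv_two_mul_volume_le_exampleMeasure (s : Set (ℝ × ℝ)) :
    2⁻¹ * volume (Icc 0 1 ∩ (fun x : ℝ => (x, (-1 : ℝ))) ⁻¹' s) ≤ exampleMeasure s := by
  have hembed : Measurable fun x : ℝ => (x, (-1 : ℝ)) := by fun_prop
  calc 2⁻¹ * volume (Icc 0 1 ∩ (fun x : ℝ => (x, (-1 : ℝ))) ⁻¹' s)
      = 2⁻¹ * volume.restrict (Icc (0 : ℝ) 1) ((fun x : ℝ => (x, (-1 : ℝ))) ⁻¹' s) := by
        rw [Measure.restrict_apply' measurableSet_Icc, inter_comm]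
    _ ≤ 2⁻¹ * Measure.map (fun x : ℝ => (x, (-1 : ℝ))) (volume.restrict (Icc (0 : ℝ) 1)) s := by
        gcongr
        exact Measure.le_map_apply hembed.aemeasurable s
    _ ≤ exampleMeasure s := by
        rw [exampleMeasure, Measure.add_apply, Measure.smul_apply, Measure.smul_apply,
          one_div, smul_eq_mul, smul_eq_mul]
        exact le_add_self

noncomputable def quadraticLoss (a b : ℝ) : ℝ :=
  ∫ p, (1 - p.2 * (a * p.1 + b)) ^ 2 ∂exampleMeasure

lemma quadraticLoss_eq (a b : ℝ) :
    quadraticLoss a b =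
      2⁻¹ * (1 - (a * (5 / 4) + b)) ^ 2 + 2⁻¹ * ((1 + b) ^ 2 + (1 + b) * a + a ^ 2 / 3) := by
  rw [quadraticLoss, integral_exampleMeasure (by fun_prop), ← integral_add_mul_sq_zero_one]
  congr 2
  · ring
  · congr 1; ext x; ring

lemma quadraticLoss_eq_min_add (a b : ℝ) :
    quadraticLoss a b = quadraticLoss (72 / 35) (-9 / 5) +
      ((b + 9 / 5) + 7 / 8 * (a - 72 / 35)) ^ 2 + 35 / 192 * (a - 72 / 35) ^ 2 := by
  rw [quadraticLoss_eq, quadraticLoss_eq]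
  ring

lemma eq_of_forall_quadraticLoss_le {a b : ℝ}
    (hmin : ∀ a' b', quadraticLoss a b ≤ quadraticLoss a' b') :
    a = 72 / 35 ∧ b = -9 / 5 := by
  have hle := hmin (72 / 35) (-9 / 5)
  rw [quadraticLoss_eq_min_add a b] at hle
  have ha : a = 72 / 35 := by
    nlinarith [sq_nonneg ((b + 9 / 5) + 7 / 8 * (a - 72 / 35)), sq_nonneg (a - 72 / 35)]
  subst ha
  exact ⟨rfl, by nlinarith [sq_nonneg (b + 9 / 5)]⟩

lemma one_div_sixteen_le_exampleMeasure_misclassified_leastSquares :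
    (1 / 16 : ENNReal) ≤ exampleMeasure
      {p : ℝ × ℝ | p.2 ≠ (if 0 ≤ 72 / 35 * p.1 + -9 / 5 then (1 : ℝ) else -1)} := by
  have hsub : Icc (7 / 8 : ℝ) 1 ⊆ Icc 0 1 ∩ (fun x : ℝ => (x, (-1 : ℝ))) ⁻¹'
      {p : ℝ × ℝ | p.2 ≠ (if 0 ≤ 72 / 35 * p.1 + -9 / 5 then (1 : ℝ) else -1)} := by
    rintro x ⟨hx₀, hx₁⟩
    refine ⟨⟨by linarith, hx₁⟩, ?_⟩
    rw [mem_preimage, mem_ofPred_eq, if_pos (by linarith)]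
    norm_num
  calc (1 / 16 : ENNReal) = 2⁻¹ * volume (Icc (7 / 8 : ℝ) 1) := by
        rw [Real.volume_Icc, show (1 : ℝ) - 7 / 8 = 8⁻¹ by norm_num,
          ENNReal.ofReal_inv_of_pos (by norm_num), ENNReal.ofReal_ofNat,
          ← ENNReal.mul_inv (by simp) (by simp)]
        norm_num
    _ ≤ _ := by grw [hsub]
    _ ≤ _ := inv_two_mul_volume_le_exampleMeasure _

/-- Every global minimizer `(a*, b*)` of the population quadratic loss
`E[(1 - Y (aX + b))²]` for the linear model misclassifies with probability at
least `1/16`. -/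
theorem quadratic_loss_global_min_misclassifies
    (a b : ℝ)
    (hmin : ∀ a' b' : ℝ,
      (∫ p, (1 - p.2 * (a * p.1 + b)) ^ 2 ∂exampleMeasure) ≤
      (∫ p, (1 - p.2 * (a' * p.1 + b')) ^ 2 ∂exampleMeasure)) :
    (1 / 16 : ENNReal) ≤
      exampleMeasure {p : ℝ × ℝ | p.2 ≠ (if 0 ≤ a * p.1 + b then (1 : ℝ) else -1)} := by
  obtain ⟨rfl, rfl⟩ := eq_of_forall_quadraticLoss_le hmin
  exact one_div_sixteen_le_exampleMeasure_misclassified_leastSquares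
end

section
/- Let ℓ : ℝ → ℝ satisfy ℓ(z) ≥ 𝟙{z ≥ 0}, ℓ(z) ≥ 0 for all z, and ℓ(z) = 0 whenever z ≤ -z₀ for some fixed z₀ > 0. Let F be a family of predictors f : ℝ^d → ℝ that is closed under the affine transformation f ↦ α(f - β) for all α > 0, β ∈ ℝ (i.e., for any f ∈ F, α > 0, β ∈ ℝ, the function x ↦ α(f(x) - β) is also in F). For a dataset (x_i,y_i)_{i=1}^n with y_i ∈ {-1,1}, the following are equivalent: (1) inf over f ∈ F of (1/n)∑_i ℓ(-y_i f(x_i)) equals 0 and is attained; (2) there exists f ∈ F that classifies all samples correctly, i.e., y_i = sgn(f(x_i)) for all i (with sgn(z)=1 iff z ≥ 0). Moreover, if (2) holds, then every global minimizer f* of the empirical loss over F has zero training error. -/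
/-!
Zero loss on a sample forces a positive margin `y f(x)`, hence the correct label. Conversely, the
margins of a correct classifier are positive except where `f(x) = 0` and `y = 1`; a small negative
shift makes all of them positive without flipping the strictly negative outputs, and scaling then
pushes every margin past `z₀`, where the loss vanishes. That predictor has loss `0`, so every
global minimizer has loss `0` too, hence zero training error.
-/

open Filter Topology

theorem inv_card_mul_sum_eq_zero_iff {ι : Type*} [Fintype ι] {g : ι → ℝ} (hg : ∀ i, 0 ≤ g i) :
    (1 / (Fintype.card ι : ℝ)) * ∑ i, g i = 0 ↔ ∀ i, g i = 0 := by
  cases isEmpty_or_nonempty ι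
  · simp
  · rw [mul_eq_zero, Fintype.sum_eq_zero_iff_of_nonneg hg, funext_iff]
    simp [Fintype.card_ne_zero]

theorem eq_sign_of_mul_pos {y t : ℝ} (hy : y = 1 ∨ y = -1) (h : 0 < y * t) :
    y = if 0 ≤ t then 1 else -1 := by
  rcases hy with rfl | rfl
  · rw [if_pos (by linarith)]
  · rw [if_neg (by linarith)]

theorem exists_shift_forall_mul_sub_pos {ι : Type*} [Finite ι] (t y : ι → ℝ)
    (hc : ∀ i, y i = if 0 ≤ t i then 1 else -1) :
    ∃ β, ∀ i, 0 < y i * (t i - β) := by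
  have hshift : ∀ᶠ β in 𝓝[<] (0 : ℝ), ∀ i, t i < 0 → t i < β :=
    eventually_all.2 fun i => eventually_imp_distrib_left.2 fun hi =>
      eventually_nhdsWithin_of_eventually_nhds (eventually_gt_nhds hi)
  obtain ⟨β, hβ, hβneg⟩ := (hshift.and self_mem_nhdsWithin).exists
  refine ⟨β, fun i => ?_⟩
  rw [hc i]
  split_ifs with hti
  · linarith
  · linarith [hβ i (not_le.1 hti)]

theorem exists_pos_forall_le_mul {ι : Type*} [Finite ι] {m : ι → ℝ} (hm : ∀ i, 0 < m i)
    (z₀ : ℝ) : ∃ α, 0 < α ∧ ∀ i, z₀ ≤ α * m i := by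
  have hscale : ∀ᶠ α in atTop, ∀ i, z₀ ≤ α * m i :=
    eventually_all.2 fun i => (tendsto_id.atTop_mul_const (hm i)).eventually_ge_atTop z₀
  exact ((eventually_gt_atTop 0).and hscale).exists

theorem exists_mem_forall_le_mul_of_forall_eq_sign {ι X : Type*} [Finite ι] {F : Set (X → ℝ)}
    (hclosed : ∀ f ∈ F, ∀ α : ℝ, 0 < α → ∀ β : ℝ, (fun x => α * (f x - β)) ∈ F)
    {f : X → ℝ} (hf : f ∈ F) (x : ι → X) (y : ι → ℝ)
    (hc : ∀ i, y i = if 0 ≤ f (x i) then 1 else -1) (z₀ : ℝ) :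
    ∃ g ∈ F, ∀ i, z₀ ≤ y i * g (x i) := by
  obtain ⟨β, hβ⟩ := exists_shift_forall_mul_sub_pos (fun i => f (x i)) y hc
  obtain ⟨α, hα, hαβ⟩ := exists_pos_forall_le_mul hβ z₀
  refine ⟨_, hclosed f hf α hα β, fun i => ?_⟩
  linarith [hαβ i]

open Classical in
theorem zero_loss_iff_zero_error_general
    (d n : ℕ) (ℓ : ℝ → ℝ) (z₀ : ℝ)
    (hℓ0 : ∀ z : ℝ, 0 ≤ ℓ z)
    (hℓ1 : ∀ z : ℝ, 0 ≤ z → 1 ≤ ℓ z)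
    (hℓz : ∀ z : ℝ, z ≤ -z₀ → ℓ z = 0)
    (F : Set ((Fin d → ℝ) → ℝ))
    (hclosed : ∀ f ∈ F, ∀ α : ℝ, 0 < α → ∀ β : ℝ, (fun x => α * (f x - β)) ∈ F)
    (x : Fin n → Fin d → ℝ) (y : Fin n → ℝ) (hy : ∀ i, y i = 1 ∨ y i = -1) :
    ((∃ f ∈ F, (1 / (n : ℝ)) * ∑ i, ℓ (-(y i) * f (x i)) = 0) ↔
      (∃ f ∈ F, ∀ i, y i = (if 0 ≤ f (x i) then (1 : ℝ) else -1))) ∧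
    ((∃ f ∈ F, ∀ i, y i = (if 0 ≤ f (x i) then (1 : ℝ) else -1)) →
      ∀ fstar ∈ F,
        (∀ g ∈ F, (1 / (n : ℝ)) * ∑ i, ℓ (-(y i) * fstar (x i)) ≤
                  (1 / (n : ℝ)) * ∑ i, ℓ (-(y i) * g (x i))) →
        ∀ i, y i = (if 0 ≤ fstar (x i) then (1 : ℝ) else -1)) := by
  have hrisk : ∀ f : (Fin d → ℝ) → ℝ,
      (1 / (n : ℝ)) * ∑ i, ℓ (-(y i) * f (x i)) = 0 ↔ ∀ i, ℓ (-(y i) * f (x i)) = 0 := by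
    intro f
    simpa using inv_card_mul_sum_eq_zero_iff fun i => hℓ0 (-(y i) * f (x i))
  have hcorrect : ∀ f : (Fin d → ℝ) → ℝ, (∀ i, ℓ (-(y i) * f (x i)) = 0) →
      ∀ i, y i = if 0 ≤ f (x i) then (1 : ℝ) else -1 := by
    refine fun f h i => eq_sign_of_mul_pos (hy i) (not_le.1 fun hi => ?_)
    linarith [hℓ1 (-(y i) * f (x i)) (by linarith), h i]
  have hzero : (∃ f ∈ F, ∀ i, y i = if 0 ≤ f (x i) then (1 : ℝ) else -1) →
      ∃ g ∈ F, (1 / (n : ℝ)) * ∑ i, ℓ (-(y i) * g (x i)) = 0 := by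
    rintro ⟨f, hf, hc⟩
    obtain ⟨g, hg, hmargin⟩ := exists_mem_forall_le_mul_of_forall_eq_sign hclosed hf x y hc z₀
    exact ⟨g, hg, (hrisk g).2 fun i => hℓz _ (by linarith [hmargin i])⟩
  refine ⟨⟨fun ⟨f, hf, h⟩ => ⟨f, hf, hcorrect f ((hrisk f).1 h)⟩, hzero⟩, ?_⟩
  intro hc fstar _ hmin
  obtain ⟨g, hg, hg0⟩ := hzero hc
  refine hcorrect fstar ((hrisk fstar).1 (le_antisymm (hg0 ▸ hmin g hg) ?_))
  exact mul_nonneg (by positivity) (Finset.sum_nonneg fun i _ => hℓ0 _)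

open Classical in
/-- For a surrogate loss that dominates the 0-1 loss, is non-negative, and vanishes
on `(-∞, -z₀]`, and a predictor family closed under positive scaling and shifting:
the minimal empirical loss is zero and attained iff some predictor classifies all
samples correctly; moreover in that case every global minimizer of the empirical
loss has zero training error. -/
theorem zero_loss_iff_zero_error
    (d n : ℕ) (ℓ : ℝ → ℝ) (z₀ : ℝ) (hz₀ : 0 < z₀)
    (hℓ0 : ∀ z : ℝ, 0 ≤ ℓ z)
    (hℓ1 : ∀ z : ℝ, 0 ≤ z → 1 ≤ ℓ z)
    (hℓz : ∀ z : ℝ, z ≤ -z₀ → ℓ z = 0)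
    (F : Set ((Fin d → ℝ) → ℝ))
    (hclosed : ∀ f ∈ F, ∀ α : ℝ, 0 < α → ∀ β : ℝ, (fun x => α * (f x - β)) ∈ F)
    (x : Fin n → Fin d → ℝ) (y : Fin n → ℝ) (hy : ∀ i, y i = 1 ∨ y i = -1) :
    ((∃ f ∈ F, (1 / (n : ℝ)) * ∑ i, ℓ (-(y i) * f (x i)) = 0) ↔
      (∃ f ∈ F, ∀ i, y i = (if 0 ≤ f (x i) then (1 : ℝ) else -1))) ∧
    ((∃ f ∈ F, ∀ i, y i = (if 0 ≤ f (x i) then (1 : ℝ) else -1)) →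
      ∀ fstar ∈ F,
        (∀ g ∈ F, (1 / (n : ℝ)) * ∑ i, ℓ (-(y i) * fstar (x i)) ≤
                  (1 / (n : ℝ)) * ∑ i, ℓ (-(y i) * g (x i))) →
        ∀ i, y i = (if 0 ≤ fstar (x i) then (1 : ℝ) else -1)) :=
  zero_loss_iff_zero_error_general d n ℓ z₀ hℓ0 hℓ1 hℓz F hclosed x y hy
end

section
/- Let ℓ : ℝ → ℝ be convex and differentiable, let σ : ℝ → ℝ, and consider a dataset (x_i, y_i)_{i=1}^{2n} in ℝ^d × {-1,1} with the pairing property: there is an involution i ↦ π(i) without fixed points on {1,...,2n} such that x_{π(i)} = -x_i and y_{π(i)} = y_i for all i. Suppose σ(z) + σ(-z) = c for all z ∈ ℝ (a constant c). Define f(x; a₀,...,a_M, w_1,...,w_M) = a₀ + ∑_{j=1}^M a_j σ(⟨w_j, x⟩). Choose a₀* to minimize the convex function a ↦ ∑_i ℓ(-y_i(a - M·σ(0))) and set a_j* = -1, w_j* = 0 for all j, and let θ* = (a₀*, -1, ..., -1, 0, ..., 0). Then for ALL perturbations Δ consisting of Δa₀ ∈ ℝ, Δa_j with |Δa_j| <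 1/2, and Δw_j ∈ ℝ^d, the empirical loss satisfies ∑_i ℓ(-y_i f(x_i; θ* + Δ)) ≥ ∑_i ℓ(-y_i f(x_i; θ*)). -/
/-- Sigmoid-class counterexample (core computation): for a dataset with the antipodal
pairing property and a neuron satisfying `σ(z) + σ(-z) = c`, the constructed point
(`a₀*` optimal for the constant-output problem, `aⱼ* = -1`, `wⱼ* = 0`) cannot be
improved by any perturbation `Δa₀ ∈ ℝ`, `|Δaⱼ| < 1/2`, `Δwⱼ ∈ ℝ^d`. -/
theorem sigmoid_class_local_min
    (d n M : ℕ)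
    (x : Fin (2 * n) → Fin d → ℝ) (y : Fin (2 * n) → ℝ)
    (hy : ∀ i, y i = 1 ∨ y i = -1)
    (π : Fin (2 * n) → Fin (2 * n))
    (hinv : ∀ i, π (π i) = i) (hnofix : ∀ i, π i ≠ i)
    (hxpair : ∀ i, x (π i) = -x i) (hypair : ∀ i, y (π i) = y i)
    (ℓ : ℝ → ℝ) (hconv : ConvexOn ℝ Set.univ ℓ) (hdiff : Differentiable ℝ ℓ)
    (σ : ℝ → ℝ) (c : ℝ) (hσ : ∀ z : ℝ, σ z + σ (-z) = c)
    (a0s : ℝ)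
    (ha0 : ∀ a : ℝ, ∑ i, ℓ (-(y i) * (a0s - (M : ℝ) * σ 0)) ≤
                    ∑ i, ℓ (-(y i) * (a - (M : ℝ) * σ 0))) :
    ∀ (Δa0 : ℝ) (Δa : Fin M → ℝ), (∀ j, |Δa j| < 1 / 2) →
      ∀ Δw : Fin M → Fin d → ℝ,
        ∑ i, ℓ (-(y i) * (a0s - (M : ℝ) * σ 0)) ≤
        ∑ i, ℓ (-(y i) * ((a0s + Δa0) +
          ∑ j, (-1 + Δa j) * σ (∑ k, Δw j k * x i k))) := by
  intro Δa0 Δa _ Δw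
  -- the perturbed output
  set g : Fin (2 * n) → ℝ := fun i =>
    (a0s + Δa0) + ∑ j, (-1 + Δa j) * σ (∑ k, Δw j k * x i k) with hg
  -- the comparison constant
  set a : ℝ := a0s + Δa0 + σ 0 * ∑ j, Δa j with ha
  set A : ℝ := a - (M : ℝ) * σ 0 with hA
  have hc : c = 2 * σ 0 := by have := hσ 0; simp at this; linarith
  -- antipodal pairing: g i + g (π i) = 2 A
  have hpair : ∀ i, g i + g (π i) = 2 * A := by
    intro i
    have hσs : ∀ j, σ (∑ k, Δw j k * x (π i) k) = c - σ (∑ k, Δw j k * x i k) := by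
      intro j
      have : (∑ k, Δw j k * x (π i) k) = -(∑ k, Δw j k * x i k) := by
        rw [hxpair i, ← Finset.sum_neg_distrib]
        exact Finset.sum_congr rfl (fun k _ => by simp [Pi.neg_apply])
      rw [this]; have := hσ (∑ k, Δw j k * x i k); linarith
    have hsum : (∑ j, (-1 + Δa j) * σ (∑ k, Δw j k * x i k))
        + (∑ j, (-1 + Δa j) * σ (∑ k, Δw j k * x (π i) k))
        = ∑ j : Fin M, (-1 + Δa j) * c := by
      rw [← Finset.sum_add_distrib]
      refine Finset.sum_congr rfl (fun j _ => ?_)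
      rw [hσs j]; ring
    have hMc : (∑ j : Fin M, (-1 + Δa j) * c) = (∑ j, Δa j) * c - (M : ℝ) * c := by
      rw [Finset.sum_congr rfl (fun j _ => by ring : ∀ j ∈ Finset.univ,
        (-1 + Δa j) * c = Δa j * c - c), Finset.sum_sub_distrib,
        ← Finset.sum_mul]
      simp
    simp only [hg, hA, ha]
    have h2 := hsum
    rw [hMc, hc] at h2
    nlinarith [h2]
  -- midpoint convexity
  have hmid : ∀ u v : ℝ, ℓ u + ℓ v ≥ 2 * ℓ ((u + v) / 2) := by
    intro u v
    have h := hconv.2 (Set.mem_univ u) (Set.mem_univ v)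
      (by norm_num : (0:ℝ) ≤ 1/2) (by norm_num : (0:ℝ) ≤ 1/2) (by norm_num)
    simp only [smul_eq_mul] at h
    have e : (1/2 : ℝ) * u + (1/2 : ℝ) * v = (u + v) / 2 := by ring
    rw [e] at h
    linarith
  have key : ∑ i, ℓ (-(y i) * A) ≤ ∑ i, ℓ (-(y i) * g i) := by
    have hperm : (∑ i, ℓ (-(y i) * g i)) = ∑ i, ℓ (-(y (π i)) * g (π i)) :=
      (Fintype.sum_equiv (Function.Involutive.toPerm π hinv)
        (fun i => ℓ (-(y (π i)) * g (π i))) (fun i => ℓ (-(y i) * g i))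
        (fun i => rfl)).symm
    have h2 : 2 * (∑ i, ℓ (-(y i) * g i)) ≥ 2 * ∑ i, ℓ (-(y i) * A) := by
      have : 2 * (∑ i, ℓ (-(y i) * g i))
          = ∑ i, (ℓ (-(y i) * g i) + ℓ (-(y (π i)) * g (π i))) := by
        rw [Finset.sum_add_distrib, ← hperm]; ring
      rw [this]
      have hbd : ∀ i, ℓ (-(y i) * g i) + ℓ (-(y (π i)) * g (π i)) ≥ 2 * ℓ (-(y i) * A) := by
        intro i
        have h := hmid (-(y i) * g i) (-(y (π i)) * g (π i))
        have heq : (-(y i) * g i + -(y (π i)) * g (π i)) / 2 = -(y i) * A := by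
          rw [hypair i]
          linear_combination (-(y i) / 2) * hpair i
        rwa [heq] at h
      calc ∑ i, (ℓ (-(y i) * g i) + ℓ (-(y (π i)) * g (π i)))
          ≥ ∑ i, 2 * ℓ (-(y i) * A) := Finset.sum_le_sum (fun i _ => hbd i)
        _ = 2 * ∑ i, ℓ (-(y i) * A) := by rw [Finset.mul_sum]
    linarith
  calc ∑ i, ℓ (-(y i) * (a0s - (M : ℝ) * σ 0))
      ≤ ∑ i, ℓ (-(y i) * (a - (M : ℝ) * σ 0)) := ha0 a
    _ = ∑ i, ℓ (-(y i) * A) := by rw [hA]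
    _ ≤ ∑ i, ℓ (-(y i) * g i) := key
end

section
/- Let ℓ : ℝ → ℝ be convex and differentiable and σ : ℝ → ℝ satisfy σ(z) = 0 for all z ≤ 0. Let (x_i, y_i)_{i=1}^n be a dataset with all x_i of the form (x_i^{(1)},...,x_i^{(d-1)}, 1) (last coordinate 1) and ‖x_i‖ ≤ K for all i. Fix weight vectors w_j* with unit-norm first d-1 coordinates and last coordinate -(K+1), so ⟨w_j*, x_i⟩ ≤ -1 for all i, j. Set a_j* arbitrary for j ≥ 1 and a₀* = argmin_a ∑_i ℓ(-y_i a). Then θ* = (a₀*, a_1*,...,a_M*, w_1*,...,w_M*) is a local minimum of the empirical loss L(θ) = (1/n)∑_i ℓ(-y_i(a₀ + ∑_j a_j σ(⟨w_j, x_i⟩))): there exists ε > 0 such that for all perturbations with ∑_j ‖Δw_j‖ ≤ ε and arbitrary Δa₀, Δa_j, the loss does not decrease. At θ*, f(x_i; θ*) = a₀* is constant, so if the dataset contains both labels, the training error at θ* is at least min(n₊, n₋)/n > 0. -/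
/-!
The preactivation of every hidden unit is at most `-1` on the data, by Cauchy–Schwarz on the
first `d` coordinates and the bias `-(K + 1)`. A weight perturbation of norm at most `1 / (|K| + 1)`
moves a preactivation by at most `1`, so it stays nonpositive, `σ` kills every hidden unit, and the
perturbed network is the constant `a₀* + Δa₀`, which cannot beat the optimal constant `a₀*`.
A constant network predicts a single label, so it misclassifies the whole opposite class.
-/

open Finset

lemma sum_mul_le_neg_one_of_last_eq_one {d : ℕ} {K : ℝ} {v w : Fin (d + 1) → ℝ}
    (hv_last : v (Fin.last d) = 1) (hv : √(∑ k, v k ^ 2) ≤ K)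
    (hw : √(∑ k : Fin d, w k.castSucc ^ 2) ≤ 1) (hw_last : w (Fin.last d) = -(K + 1)) :
    ∑ k, w k * v k ≤ -1 := by
  have hv_init : √(∑ k : Fin d, v k.castSucc ^ 2) ≤ √(∑ k, v k ^ 2) := by
    gcongr
    rw [Fin.sum_univ_castSucc]
    exact le_add_of_nonneg_right (sq_nonneg _)
  have h_init : ∑ k : Fin d, w k.castSucc * v k.castSucc ≤ K :=
    calc ∑ k : Fin d, w k.castSucc * v k.castSucc
        ≤ √(∑ k : Fin d, w k.castSucc ^ 2) * √(∑ k : Fin d, v k.castSucc ^ 2) :=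
          Real.sum_mul_le_sqrt_mul_sqrt _ _ _
      _ ≤ √(∑ k, v k ^ 2) := (mul_le_of_le_one_left (Real.sqrt_nonneg _) hw).trans hv_init
      _ ≤ K := hv
  rw [Fin.sum_univ_castSucc, hw_last, hv_last]
  linarith

lemma sum_add_mul_nonpos {ι : Type*} [Fintype ι] {K : ℝ} {v w Δ : ι → ℝ}
    (hwv : ∑ k, w k * v k ≤ -1) (hv : √(∑ k, v k ^ 2) ≤ K)
    (hΔ : √(∑ k, Δ k ^ 2) ≤ 1 / (|K| + 1)) :
    ∑ k, (w k + Δ k) * v k ≤ 0 := by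
  have hΔv : √(∑ k, Δ k ^ 2) * √(∑ k, v k ^ 2) ≤ 1 :=
    calc √(∑ k, Δ k ^ 2) * √(∑ k, v k ^ 2) ≤ 1 / (|K| + 1) * |K| :=
          mul_le_mul hΔ (hv.trans (le_abs_self K)) (Real.sqrt_nonneg _) (by positivity)
      _ ≤ 1 := by
          rw [div_mul_eq_mul_div, one_mul, div_le_one (by positivity)]
          linarith
  simp only [add_mul, sum_add_distrib]
  linarith [Real.sum_mul_le_sqrt_mul_sqrt univ Δ v]

lemma sum_mul_eq_zero_of_nonpos {ι : Type*} [Fintype ι] {σ : ℝ → ℝ}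
    (hσ : ∀ z : ℝ, z ≤ 0 → σ z = 0) (a : ι → ℝ) {z : ι → ℝ} (hz : ∀ j, z j ≤ 0) :
    ∑ j, a j * σ (z j) = 0 :=
  sum_eq_zero fun j _ => by rw [hσ _ (hz j), mul_zero]

lemma min_card_le_sum_ne {ι : Type*} [Fintype ι] (y : ι → ℝ) {p : ℝ} (hp : p = 1 ∨ p = -1) :
    min ((univ.filter (fun i => y i = 1)).card : ℝ)
        ((univ.filter (fun i => y i = -1)).card : ℝ) ≤
      ∑ i, if y i ≠ p then (1 : ℝ) else 0 := by
  rw [sum_boole]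
  rcases hp with rfl | rfl
  · refine (min_le_right _ _).trans ?_
    gcongr with i
    intro hi
    norm_num [hi]
  · refine (min_le_left _ _).trans ?_
    gcongr with i
    intro hi
    norm_num [hi]

open Classical in
theorem dead_relu_local_min_general
    (d n M : ℕ) (K : ℝ)
    (x : Fin n → Fin (d + 1) → ℝ) (y : Fin n → ℝ)
    (hlast : ∀ i, x i (Fin.last d) = 1)
    (hK : ∀ i, Real.sqrt (∑ k, (x i k) ^ 2) ≤ K)
    (ℓ : ℝ → ℝ)
    (σ : ℝ → ℝ) (hσ : ∀ z : ℝ, z ≤ 0 → σ z = 0)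
    (w : Fin M → Fin (d + 1) → ℝ)
    (hwnorm : ∀ j, Real.sqrt (∑ k : Fin d, (w j (Fin.castSucc k)) ^ 2) = 1)
    (hwlast : ∀ j, w j (Fin.last d) = -(K + 1))
    (a : Fin M → ℝ) (a0s : ℝ)
    (ha0 : ∀ b : ℝ, ∑ i, ℓ (-(y i) * a0s) ≤ ∑ i, ℓ (-(y i) * b)) :
    (∀ i, a0s + ∑ j, a j * σ (∑ k, w j k * x i k) = a0s) ∧
    (∃ ε > (0 : ℝ), ∀ (Δa0 : ℝ) (Δa : Fin M → ℝ) (Δw : Fin M → Fin (d + 1) → ℝ),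
      (∑ j, Real.sqrt (∑ k, (Δw j k) ^ 2)) ≤ ε →
      ∑ i, ℓ (-(y i) * a0s) ≤
      ∑ i, ℓ (-(y i) * ((a0s + Δa0) +
        ∑ j, (a j + Δa j) * σ (∑ k, (w j k + Δw j k) * x i k)))) ∧
    ((∃ i, y i = 1) → (∃ i, y i = -1) →
      (min ((Finset.univ.filter (fun i => y i = 1)).card : ℝ)
           ((Finset.univ.filter (fun i => y i = -1)).card : ℝ)) / (n : ℝ) ≤
      (1 / (n : ℝ)) * ∑ i,
        (if y i ≠ (if 0 ≤ a0s + ∑ j, a j * σ (∑ k, w j k * x i k)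
                   then (1 : ℝ) else -1) then (1 : ℝ) else 0)) := by
  have hpre : ∀ i j, ∑ k, w j k * x i k ≤ -1 := fun i j =>
    sum_mul_le_neg_one_of_last_eq_one (hlast i) (hK i) (hwnorm j).le (hwlast j)
  have hout : ∀ i, a0s + ∑ j, a j * σ (∑ k, w j k * x i k) = a0s := fun i => by
    rw [sum_mul_eq_zero_of_nonpos hσ a fun j => (hpre i j).trans (by norm_num), add_zero]
  refine ⟨hout, ⟨1 / (|K| + 1), by positivity, fun Δa0 Δa Δw hΔ => ?_⟩, fun _ _ => ?_⟩
  · have hdead : ∀ i, ∑ j, (a j + Δa j) * σ (∑ k, (w j k + Δw j k) * x i k) = 0 := fun i =>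
      sum_mul_eq_zero_of_nonpos hσ _ fun j => sum_add_mul_nonpos (hpre i j) (hK i) <|
        (single_le_sum (f := fun j => √(∑ k, Δw j k ^ 2)) (fun j _ => Real.sqrt_nonneg _)
          (mem_univ j)).trans hΔ
    simpa only [hdead, add_zero] using ha0 (a0s + Δa0)
  · simp only [hout]
    rw [one_div_mul_eq_div]
    gcongr
    exact min_card_le_sum_ne y (by split_ifs <;> simp)

open Classical in
/-- ReLU-class counterexample (dead neurons): with all pre-activations at most `-1`,
the constructed point is a local minimum of the empirical loss whose network output is
the constant `a₀*`; if both labels are present its training error is at least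
`min(n₊, n₋)/n`. -/
theorem dead_relu_local_min
    (d n M : ℕ) (K : ℝ)
    (x : Fin n → Fin (d + 1) → ℝ) (y : Fin n → ℝ)
    (hy : ∀ i, y i = 1 ∨ y i = -1)
    (hlast : ∀ i, x i (Fin.last d) = 1)
    (hK : ∀ i, Real.sqrt (∑ k, (x i k) ^ 2) ≤ K)
    (ℓ : ℝ → ℝ) (hconv : ConvexOn ℝ Set.univ ℓ) (hdiff : Differentiable ℝ ℓ)
    (σ : ℝ → ℝ) (hσ : ∀ z : ℝ, z ≤ 0 → σ z = 0)
    (w : Fin M → Fin (d + 1) → ℝ)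
    (hwnorm : ∀ j, Real.sqrt (∑ k : Fin d, (w j (Fin.castSucc k)) ^ 2) = 1)
    (hwlast : ∀ j, w j (Fin.last d) = -(K + 1))
    (a : Fin M → ℝ) (a0s : ℝ)
    (ha0 : ∀ b : ℝ, ∑ i, ℓ (-(y i) * a0s) ≤ ∑ i, ℓ (-(y i) * b)) :
    (∀ i, a0s + ∑ j, a j * σ (∑ k, w j k * x i k) = a0s) ∧
    (∃ ε > (0 : ℝ), ∀ (Δa0 : ℝ) (Δa : Fin M → ℝ) (Δw : Fin M → Fin (d + 1) → ℝ),
      (∑ j, Real.sqrt (∑ k, (Δw j k) ^ 2)) ≤ ε →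
      ∑ i, ℓ (-(y i) * a0s) ≤
      ∑ i, ℓ (-(y i) * ((a0s + Δa0) +
        ∑ j, (a j + Δa j) * σ (∑ k, (w j k + Δw j k) * x i k)))) ∧
    ((∃ i, y i = 1) → (∃ i, y i = -1) →
      (min ((Finset.univ.filter (fun i => y i = 1)).card : ℝ)
           ((Finset.univ.filter (fun i => y i = -1)).card : ℝ)) / (n : ℝ) ≤
      (1 / (n : ℝ)) * ∑ i,
        (if y i ≠ (if 0 ≤ a0s + ∑ j, a j * σ (∑ k, w j k * x i k)
                   then (1 : ℝ) else -1) then (1 : ℝ) else 0)) :=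
  dead_relu_local_min_general d n M K x y hlast hK ℓ σ hσ w hwnorm hwlast a a0s ha0
end

section
/- Let ℓ : ℝ → ℝ be convex and differentiable, and let σ : ℝ → ℝ satisfy σ(z) = z for all z ≥ 0. Let (x_i, y_i)_{i=1}^n be a dataset with ‖x_i‖ ≤ K₁ for all i, and let w* minimize the convex function w ↦ ∑_i ℓ(-y_i ⟨w, x_i⟩) over ℝ^d. Suppose all x_i have last coordinate 1 and define w_j* = w* + (K+1)·e_d where K = max_i |⟨w*, x_i⟩| and e_d is the last standard basis vector, so that ⟨w_j*, x_i⟩ ≥ 1 for all i, j. Set a_j* = 1/M for j = 1,...,M and a₀* = 0. Then there exists ε > 0 such that for all perturbations Δa₀, Δa_j, Δw_j with |Δa_j| bounded and ‖Δw_j‖ ≤ ε, the perturbed network f(x_i; θ̃) = Δa₀ + ∑_j (1/M + Δa_j)·⟨w_j* + Δw_j, x_i⟩ is an affine function of x_i evaluated at each data point, and hence the empirical loss at θ̃ is at least ∑_i ℓ(-y_i ⟨w*, x_i⟩) = the loss at θ*. In particular θ* is a local minimum whose training error equals the best linear classifier's error for the surrogate-optimal linear predictor. -/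
/-!
Shifting `w*` by `(K + 1) e_d` raises every pre-activation `⟨w_j, x_i⟩` to at least `1`, and by
Cauchy–Schwarz a perturbation of norm at most `1 / (|K₁| + 1)` moves it by at most `1`. So all
pre-activations stay nonnegative, where `σ` is the identity, and the perturbed network is the
linear predictor `Δa₀ e_d + ∑ⱼ (1/M + Δaⱼ) (w_j + Δw_j)` on the data (the constant `Δa₀` is
absorbed by the last coordinate of `x_i`, which is `1`). Its loss is at least that of the optimal
linear predictor `w*`.
-/

open Finset

lemma neg_one_le_dotProduct_of_sqrt_sum_sq_le {ι : Type*} [Fintype ι] {v u : ι → ℝ} {B : ℝ}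
    (hu : √(∑ k, u k ^ 2) ≤ B) (hv : √(∑ k, v k ^ 2) ≤ 1 / (|B| + 1)) :
    -1 ≤ v ⬝ᵥ u := by
  have hcs : -(v ⬝ᵥ u) ≤ √(∑ k, v k ^ 2) * √(∑ k, u k ^ 2) := by
    simpa [dotProduct, neg_sq] using Real.sum_mul_le_sqrt_mul_sqrt univ (-v) u
  have hB : 1 / (|B| + 1) * |B| ≤ 1 := by
    rw [div_mul_eq_mul_div, one_mul, div_le_one (by positivity)]
    linarith
  have hprod : √(∑ k, v k ^ 2) * √(∑ k, u k ^ 2) ≤ 1 / (|B| + 1) * |B| :=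
    mul_le_mul hv (hu.trans (le_abs_self B)) (Real.sqrt_nonneg _) (by positivity)
  linarith

lemma dotProduct_add_smul_indicator_add_nonneg {ι : Type*} [Fintype ι] [DecidableEq ι]
    {i₀ : ι} {ws u Δ : ι → ℝ} {K B : ℝ} (hu₀ : u i₀ = 1) (hK : |ws ⬝ᵥ u| ≤ K)
    (hu : √(∑ k, u k ^ 2) ≤ B) (hΔ : √(∑ k, Δ k ^ 2) ≤ 1 / (|B| + 1)) :
    0 ≤ (ws + (K + 1) • (fun k => if k = i₀ then (1 : ℝ) else 0) + Δ) ⬝ᵥ u := by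
  have hshift : (fun k => if k = i₀ then (1 : ℝ) else 0) ⬝ᵥ u = 1 := by
    simp [dotProduct, ite_mul, hu₀]
  rw [add_dotProduct, add_dotProduct, smul_dotProduct, hshift, smul_eq_mul, mul_one]
  linarith [neg_abs_le (ws ⬝ᵥ u), neg_one_le_dotProduct_of_sqrt_sum_sq_le hu hΔ]

lemma add_sum_mul_dotProduct_eq {α ι J : Type*} [CommSemiring α] [Fintype ι] [Fintype J]
    [DecidableEq ι] {i₀ : ι} {u : ι → α} (hu₀ : u i₀ = 1) (b : α) (a : J → α)
    (v : J → ι → α) :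
    b + ∑ j, a j * (v j ⬝ᵥ u) = (b • Pi.single i₀ 1 + ∑ j, a j • v j) ⬝ᵥ u := by
  simp [add_dotProduct, sum_dotProduct, hu₀]

theorem leaky_relu_local_min_general
    (d n M : ℕ) (K K₁ : ℝ)
    (x : Fin n → Fin (d + 1) → ℝ) (y : Fin n → ℝ)
    (hlast : ∀ i, x i (Fin.last d) = 1)
    (hK₁ : ∀ i, Real.sqrt (∑ k, (x i k) ^ 2) ≤ K₁)
    (ℓ : ℝ → ℝ)
    (σ : ℝ → ℝ) (hσ : ∀ z : ℝ, 0 ≤ z → σ z = z)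
    (ws : Fin (d + 1) → ℝ)
    (hopt : ∀ v : Fin (d + 1) → ℝ,
      ∑ i, ℓ (-(y i) * ∑ k, ws k * x i k) ≤ ∑ i, ℓ (-(y i) * ∑ k, v k * x i k))
    (hK : ∀ i, |∑ k, ws k * x i k| ≤ K)
    (w : Fin M → Fin (d + 1) → ℝ)
    (hw : ∀ j, w j = ws + (K + 1) • (fun k => if k = Fin.last d then (1 : ℝ) else 0)) :
    ∃ ε > (0 : ℝ), ∀ (Δa0 : ℝ) (Δa : Fin M → ℝ) (Δw : Fin M → Fin (d + 1) → ℝ),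
      (∀ j, |Δa j| ≤ 1 / 2) → (∀ j, Real.sqrt (∑ k, (Δw j k) ^ 2) ≤ ε) →
      (∃ wt : Fin (d + 1) → ℝ, ∀ i,
        Δa0 + ∑ j, ((1 / (M : ℝ)) + Δa j) * σ (∑ k, (w j k + Δw j k) * x i k)
          = ∑ k, wt k * x i k) ∧
      ∑ i, ℓ (-(y i) * ∑ k, ws k * x i k) ≤
        ∑ i, ℓ (-(y i) * (Δa0 +
          ∑ j, ((1 / (M : ℝ)) + Δa j) * σ (∑ k, (w j k + Δw j k) * x i k))) := by
  refine ⟨1 / (|K₁| + 1), by positivity, fun Δa0 Δa Δw _ hΔw => ?_⟩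
  have hact : ∀ j i, σ ((w j + Δw j) ⬝ᵥ x i) = (w j + Δw j) ⬝ᵥ x i := fun j i =>
    hσ _ (hw j ▸ dotProduct_add_smul_indicator_add_nonneg (hlast i) (hK i) (hK₁ i) (hΔw j))
  have hnet : ∀ i, Δa0 + ∑ j, (1 / (M : ℝ) + Δa j) * σ ((w j + Δw j) ⬝ᵥ x i) =
      (Δa0 • Pi.single (Fin.last d) 1 + ∑ j, (1 / (M : ℝ) + Δa j) • (w j + Δw j)) ⬝ᵥ x i :=
    fun i => by simpa only [hact] using add_sum_mul_dotProduct_eq (hlast i) Δa0 _ _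
  exact ⟨⟨_, hnet⟩, (hopt _).trans_eq
    (sum_congr rfl fun i _ => congrArg (fun t => ℓ (-(y i) * t)) (hnet i).symm)⟩

/-- Leaky-ReLU-class counterexample (locally linear regime): near the constructed point
all pre-activations stay positive, so the network is affine in `x` at the data points,
and the empirical loss of any nearby parameter is at least the loss of the optimal
linear predictor `w*`. -/
theorem leaky_relu_local_min
    (d n M : ℕ) (hM : 0 < M) (K K₁ : ℝ)
    (x : Fin n → Fin (d + 1) → ℝ) (y : Fin n → ℝ)
    (hy : ∀ i, y i = 1 ∨ y i = -1)
    (hlast : ∀ i, x i (Fin.last d) = 1)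
    (hK₁ : ∀ i, Real.sqrt (∑ k, (x i k) ^ 2) ≤ K₁)
    (ℓ : ℝ → ℝ) (hconv : ConvexOn ℝ Set.univ ℓ) (hdiff : Differentiable ℝ ℓ)
    (σ : ℝ → ℝ) (hσ : ∀ z : ℝ, 0 ≤ z → σ z = z)
    (ws : Fin (d + 1) → ℝ)
    (hopt : ∀ v : Fin (d + 1) → ℝ,
      ∑ i, ℓ (-(y i) * ∑ k, ws k * x i k) ≤ ∑ i, ℓ (-(y i) * ∑ k, v k * x i k))
    (hK : ∀ i, |∑ k, ws k * x i k| ≤ K)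
    (w : Fin M → Fin (d + 1) → ℝ)
    (hw : ∀ j, w j = ws + (K + 1) • (fun k => if k = Fin.last d then (1 : ℝ) else 0)) :
    ∃ ε > (0 : ℝ), ∀ (Δa0 : ℝ) (Δa : Fin M → ℝ) (Δw : Fin M → Fin (d + 1) → ℝ),
      (∀ j, |Δa j| ≤ 1 / 2) → (∀ j, Real.sqrt (∑ k, (Δw j k) ^ 2) ≤ ε) →
      (∃ wt : Fin (d + 1) → ℝ, ∀ i,
        Δa0 + ∑ j, ((1 / (M : ℝ)) + Δa j) * σ (∑ k, (w j k + Δw j k) * x i k)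
          = ∑ k, wt k * x i k) ∧
      ∑ i, ℓ (-(y i) * ∑ k, ws k * x i k) ≤
        ∑ i, ℓ (-(y i) * (Δa0 +
          ∑ j, ((1 / (M : ℝ)) + Δa j) * σ (∑ k, (w j k + Δw j k) * x i k))) :=
  leaky_relu_local_min_general d n M K K₁ x y hlast hK₁ ℓ σ hσ ws hopt hK w hw
end

section
/- Let ℓ : ℝ → ℝ be twice continuously differentiable and let σ : ℝ → ℝ be twice differentiable. Define f(x; θ) = a₀ + ∑_{j=1}^M a_j σ(⟨w_j, x⟩) + g(x; θ') where g does not depend on (a_j, w_j). Let L(θ) = ∑_{i=1}^n ℓ(-y_i f(x_i; θ)). If θ* is a local minimum of L, then for every j ∈ {1,...,M}: ∑_{i=1}^n ℓ'(-y_i f(x_i;θ*))·y_i·σ'(⟨w_j*, x_i⟩)·x_i = 0 ∈ ℝ^d. -/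
/-!
Fix a unit `j` and a coordinate `k`, and restrict the loss to the plane where only `a j` and
`w j k` move: `Φ(s, t) = ∑ᵢ ℓ(cᵢ + s · hᵢ(t))` with `hᵢ(t) = -yᵢ σ(⟨w j, xᵢ⟩ + t xᵢₖ)` and `cᵢ`
collecting the other units.
If `a j ≠ 0`, the first-order condition in `t` is `a j` times the claimed sum.
If `a j = 0`, then `Φ(0, ·)` is constant, so every nearby point `(0, t)` is again a local minimum;
the first-order condition in `s` there says `∑ᵢ ℓ'(cᵢ) hᵢ(t) = 0` for all small `t`, and
differentiating in `t` gives the claim.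
-/

open Filter Topology Function

theorem IsLocalMin.eventually_isLocalMin_of_eq {X β : Type*} [TopologicalSpace X] [Preorder β]
    {f : X → β} {p : X} (h : IsLocalMin f p) : ∀ᶠ q in 𝓝 p, f q = f p → IsLocalMin f q := by
  filter_upwards [eventually_eventually_nhds.mpr h] with q hq hfq
  rwa [IsLocalMin, IsMinFilter, hfq]

theorem sum_deriv_mul_eq_zero_of_isLocalMin {ι : Type*} [Fintype ι] {ℓ : ℝ → ℝ}
    (hℓ : Differentiable ℝ ℓ) {c h' : ι → ℝ} {h : ι → ℝ → ℝ} {A : ℝ}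
    (hh : ∀ i, HasDerivAt (h i) (h' i) 0)
    (hmin : IsLocalMin (fun p : ℝ × ℝ => ∑ i, ℓ (c i + p.1 * h i p.2)) (A, 0)) :
    ∑ i, deriv ℓ (c i + A * h i 0) * h' i = 0 := by
  set Φ := fun p : ℝ × ℝ => ∑ i, ℓ (c i + p.1 * h i p.2)
  rcases eq_or_ne A 0 with rfl | hA
  · have hderiv_fst : ∀ t, HasDerivAt (fun s => Φ (s, t)) (∑ i, deriv ℓ (c i) * h i t) 0 :=
      fun t => HasDerivAt.fun_sum fun i _ =>
        ((hℓ _).hasDerivAt.comp 0 (((hasDerivAt_id 0).mul_const (h i t)).const_add (c i))).congr_deriv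
          (by simp)
    have hmin_near : ∀ᶠ t in 𝓝 (0 : ℝ), IsLocalMin Φ (0, t) :=
      ((Continuous.prodMk_right (0 : ℝ)).tendsto' 0 (0, 0) rfl).eventually
        hmin.eventually_isLocalMin_of_eq |>.mono fun t ht => ht (by simp [Φ])
    have hG : ∀ᶠ t in 𝓝 (0 : ℝ), ∑ i, deriv ℓ (c i) * h i t = 0 := by
      filter_upwards [hmin_near] with t ht
      exact (ht.comp_continuous (g := fun s => (s, t)) (b := 0)
        (Continuous.prodMk_left t).continuousAt).hasDerivAt_eq_zero (hderiv_fst t)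
    have hG' : HasDerivAt (fun t => ∑ i, deriv ℓ (c i) * h i t) (∑ i, deriv ℓ (c i) * h' i) 0 :=
      HasDerivAt.fun_sum fun i _ => (hh i).const_mul _
    simpa using hG'.unique ((hasDerivAt_const (0 : ℝ) (0 : ℝ)).congr_of_eventuallyEq hG)
  · have hderiv_snd :
        HasDerivAt (fun t => Φ (A, t)) (∑ i, deriv ℓ (c i + A * h i 0) * (A * h' i)) 0 :=
      HasDerivAt.fun_sum fun i _ => (hℓ _).hasDerivAt.comp 0 (((hh i).const_mul A).const_add (c i))
    have hzero :=
      (hmin.comp_continuous (Continuous.prodMk_right A).continuousAt).hasDerivAt_eq_zero hderiv_snd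
    simp_rw [mul_left_comm _ A, ← Finset.mul_sum] at hzero
    exact (mul_eq_zero.mp hzero).resolve_left hA

theorem Fintype.sum_update_mul_update {ι E R : Type*} [Fintype ι] [DecidableEq ι] [CommRing R] (φ : E → R)
    (a : ι → R) (w : ι → E) (j : ι) (s : R) (v : E) :
    ∑ i, update a j s i * φ (update w j v i) = ∑ i, a i * φ (w i) - a j * φ (w j) + s * φ v := by
  simp_rw [apply_update₂ (fun _ (b : R) (u : E) => b * φ u),
    Finset.sum_update_of_mem (Finset.mem_univ j),
    Finset.sum_eq_add_sum_sdiff_singleton_of_mem (Finset.mem_univ j) fun i => a i * φ (w i)]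
  ring

theorem local_min_necessary_condition_general
    (d n M : ℕ)
    (x : Fin n → Fin d → ℝ) (y : Fin n → ℝ)
    (ℓ : ℝ → ℝ) (hℓ : ContDiff ℝ 2 ℓ)
    (σ : ℝ → ℝ) (hσ1 : Differentiable ℝ σ)
    (g : (Fin d → ℝ) → ℝ)
    (a0 : ℝ) (a : Fin M → ℝ) (w : Fin M → Fin d → ℝ)
    (hmin : IsLocalMin
      (fun θ : ℝ × (Fin M → ℝ) × (Fin M → Fin d → ℝ) =>
        ∑ i, ℓ (-(y i) * (θ.1 + (∑ j, θ.2.1 j * σ (∑ k, θ.2.2 j k * x i k)) + g (x i))))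
      (a0, a, w)) :
    ∀ j, ∑ i,
      (deriv ℓ (-(y i) * (a0 + (∑ j', a j' * σ (∑ k, w j' k * x i k)) + g (x i)))
        * y i * deriv σ (∑ k, w j k * x i k)) • x i = (0 : Fin d → ℝ) := by
  intro j
  funext k
  let Ψ : ℝ × ℝ → ℝ × (Fin M → ℝ) × (Fin M → Fin d → ℝ) :=
    fun p => (a0, update a j p.1, update w j (w j + p.2 • Pi.single k 1))
  have hΨ : Ψ (a j, 0) = (a0, a, w) := by simp [Ψ]
  have hΨc : Continuous Ψ := by fun_prop
  have key := sum_deriv_mul_eq_zero_of_isLocalMin (hℓ.differentiable (by norm_num))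
    (c := fun i => -(y i) * (a0 + (∑ j', a j' * σ (w j' ⬝ᵥ x i)) - a j * σ (w j ⬝ᵥ x i) + g (x i)))
    (h := fun i t => -(y i) * σ (w j ⬝ᵥ x i + t * x i k))
    (h' := fun i => -(y i) * (deriv σ (w j ⬝ᵥ x i) * x i k)) (A := a j)
    (fun i => (((hσ1 _).hasDerivAt.comp 0 (((hasDerivAt_id 0).mul_const _).const_add _)).const_mul
      _).congr_deriv (by simp)) ?_
  · rw [Finset.sum_apply, Pi.zero_apply, ← neg_eq_zero, ← Finset.sum_neg_distrib, ← key]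
    refine Finset.sum_congr rfl fun i _ => ?_
    simp only [Pi.smul_apply, smul_eq_mul, zero_mul, add_zero, dotProduct]
    ring_nf
  · convert (hΨ ▸ hmin).comp_continuous hΨc.continuousAt using 1
    funext p
    refine Finset.sum_congr rfl fun i _ => congrArg ℓ ?_
    change _ = -(y i) * (a0 + ∑ j', update a j p.1 j' * (fun u => σ (u ⬝ᵥ x i))
      (update w j (w j + p.2 • Pi.single k 1) j') + g (x i))
    rw [Fintype.sum_update_mul_update (fun u => σ (u ⬝ᵥ x i)), add_dotProduct, smul_dotProduct, single_dotProduct]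
    simp only [smul_eq_mul, one_mul]
    ring

/-- Lemma 1 (necessary condition at a local minimum): at any local minimum of the
empirical loss, for each hidden unit `j` the weighted gradient condition
`∑ᵢ ℓ'(-yᵢ f(xᵢ;θ*)) yᵢ σ'(⟨wⱼ*, xᵢ⟩) xᵢ = 0` holds. -/
theorem local_min_necessary_condition
    (d n M : ℕ)
    (x : Fin n → Fin d → ℝ) (y : Fin n → ℝ)
    (ℓ : ℝ → ℝ) (hℓ : ContDiff ℝ 2 ℓ)
    (σ : ℝ → ℝ) (hσ1 : Differentiable ℝ σ) (hσ2 : Differentiable ℝ (deriv σ))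
    (g : (Fin d → ℝ) → ℝ)
    (a0 : ℝ) (a : Fin M → ℝ) (w : Fin M → Fin d → ℝ)
    (hmin : IsLocalMin
      (fun θ : ℝ × (Fin M → ℝ) × (Fin M → Fin d → ℝ) =>
        ∑ i, ℓ (-(y i) * (θ.1 + (∑ j, θ.2.1 j * σ (∑ k, θ.2.2 j k * x i k)) + g (x i))))
      (a0, a, w)) :
    ∀ j, ∑ i,
      (deriv ℓ (-(y i) * (a0 + (∑ j', a j' * σ (∑ k, w j' k * x i k)) + g (x i)))
        * y i * deriv σ (∑ k, w j k * x i k)) • x i = (0 : Fin d → ℝ) :=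
  local_min_necessary_condition_general d n M x y ℓ hℓ σ hσ1 g a0 a w hmin
end

section
/- Let ℓ : ℝ → ℝ be p-times continuously differentiable with p ≥ 6, non-decreasing with ℓ'(z) = 0 iff z ≤ -z₀ (z₀ > 0). Let σ : ℝ → ℝ be smooth (real analytic) with σ''(z) > 0 for all z. Define f(x;θ) = a₀ + ∑_{j=1}^M a_j σ(⟨w_j, x⟩) + g(x;θ') and L(θ) = (1/n)∑_i ℓ(-y_i f(x_i;θ)). Suppose θ* is a local minimum of L with a_1* = 0. Then ∑_{i=1}^n ℓ'(-y_i f(x_i;θ*))·y_i·σ''(⟨w_1*, x_i⟩)·⟨u, x_i⟩² = 0 for every u ∈ ℝ^d; equivalently, the matrix ∑_i ℓ'(-y_i f(x_i;θ*))·y_i·σ''(⟨w_1*, x_i⟩)·x_i x_iᵀ = 0. -/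
private lemma hasDerivAt_update_sum {M : ℕ} (b : Fin M → ℝ) (i₀ : Fin M) (C : Fin M → ℝ)
    (s : ℝ) :
    HasDerivAt (fun s : ℝ => ∑ j, Function.update b i₀ s j * C j) (C i₀) s := by
  have h1 : HasDerivAt (fun s : ℝ => ∑ j, Function.update b i₀ s j * C j)
      (∑ j, if j = i₀ then C j else 0) s := by
    apply HasDerivAt.fun_sum
    intro j _
    rcases eq_or_ne j i₀ with rfl | hj
    · simpa using (hasDerivAt_id s).mul_const (C j)
    · simpa [Function.update_of_ne hj, hj] using hasDerivAt_const s (b j * C j)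
  simpa using h1

/-- Higher-order necessary condition (Claim 1 in the proof of Theorem 1): at a local
minimum with a vanishing output weight `a₁* = 0`, the weighted second-moment form
`∑ᵢ ℓ'(-yᵢ f(xᵢ;θ*)) yᵢ σ''(⟨w₁*, xᵢ⟩) ⟨u, xᵢ⟩²` vanishes for every direction `u`. -/
theorem vanishing_output_weight_second_moment
    (d n M : ℕ) (hM : 0 < M) (p : ℕ) (hp : 6 ≤ p)
    (x : Fin n → Fin d → ℝ) (y : Fin n → ℝ)
    (ℓ : ℝ → ℝ) (hℓ : ContDiff ℝ p ℓ) (z₀ : ℝ) (hz₀ : 0 < z₀)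
    (hℓ' : ∀ z : ℝ, 0 ≤ deriv ℓ z)
    (hℓ0 : ∀ z : ℝ, deriv ℓ z = 0 ↔ z ≤ -z₀)
    (σ : ℝ → ℝ) (hσ : ContDiff ℝ (⊤ : ℕ∞) σ)
    (hσ'' : ∀ z : ℝ, 0 < deriv (deriv σ) z)
    (g : (Fin d → ℝ) → ℝ)
    (a0 : ℝ) (a : Fin M → ℝ) (w : Fin M → Fin d → ℝ)
    (ha1 : a ⟨0, hM⟩ = 0)
    (hmin : IsLocalMin
      (fun θ : ℝ × (Fin M → ℝ) × (Fin M → Fin d → ℝ) =>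
        (1 / (n : ℝ)) * ∑ i, ℓ (-(y i) *
          (θ.1 + (∑ j, θ.2.1 j * σ (∑ k, θ.2.2 j k * x i k)) + g (x i))))
      (a0, a, w)) :
    ∀ u : Fin d → ℝ, ∑ i,
      deriv ℓ (-(y i) * (a0 + (∑ j, a j * σ (∑ k, w j k * x i k)) + g (x i)))
        * y i * deriv (deriv σ) (∑ k, w ⟨0, hM⟩ k * x i k)
        * (∑ k, u k * x i k) ^ 2 = 0 := by
  intro u
  obtain rfl | hn := Nat.eq_zero_or_pos n
  · simp
  have hℓd : Differentiable ℝ ℓ := hℓ.differentiable (by exact_mod_cast (by omega : p ≠ 0))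
  have hsig : ContDiff ℝ (⊤ : ℕ∞) σ := hσ.of_le (mod_cast le_top)
  have hσd : Differentiable ℝ σ := hσ.differentiable (by simp)
  have hσ'd : Differentiable ℝ (deriv σ) :=
    ((contDiff_infty_iff_deriv.mp hsig).2).differentiable (by simp)
  have hnR : (1 / (n : ℝ)) ≠ 0 := one_div_ne_zero (Nat.cast_ne_zero.mpr hn.ne')
  set i₀ : Fin M := ⟨0, hM⟩ with hi₀
  set α : Fin n → ℝ := fun i => ∑ k, w i₀ k * x i k with hα
  set β : Fin n → ℝ := fun i => ∑ k, u k * x i k with hβ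
  set fs : Fin n → ℝ := fun i => a0 + (∑ j, a j * σ (∑ k, w j k * x i k)) + g (x i) with hfs
  set K : Fin n → ℝ := fun i => deriv ℓ (-(y i) * fs i) * (-(y i)) with hK
  set L : ℝ × (Fin M → ℝ) × (Fin M → Fin d → ℝ) → ℝ :=
    fun θ => (1 / (n : ℝ)) * ∑ i, ℓ (-(y i) *
      (θ.1 + (∑ j, θ.2.1 j * σ (∑ k, θ.2.2 j k * x i k)) + g (x i))) with hL
  -- replacing `w i₀` does not change the loss since `a i₀ = 0`
  have hupd : ∀ (v : Fin d → ℝ) (i : Fin n),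
      ∑ j, a j * σ (∑ k, Function.update w i₀ v j k * x i k)
        = ∑ j, a j * σ (∑ k, w j k * x i k) := by
    intro v i
    refine Finset.sum_congr rfl fun j _ => ?_
    rcases eq_or_ne j i₀ with rfl | hj
    · simp [ha1]
    · rw [Function.update_of_ne hj]
  have hupda : Function.update a i₀ 0 = a := by
    rw [← ha1]; exact Function.update_eq_self i₀ a
  -- the two-parameter perturbation
  set Ψ : ℝ × ℝ → ℝ × (Fin M → ℝ) × (Fin M → Fin d → ℝ) :=
    fun q => (a0, Function.update a i₀ q.2,
      Function.update w i₀ (fun k => w i₀ k + q.1 * u k)) with hΨ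
  have hΨ00 : Ψ (0, 0) = (a0, a, w) := by
    refine Prod.ext rfl (Prod.ext ?_ ?_)
    · exact hupda
    · show Function.update w i₀ (fun k => w i₀ k + (0:ℝ) * u k) = w
      simp [Function.update_eq_self]
  have hΨc : Continuous Ψ := by
    refine continuous_const.prodMk (Continuous.prodMk ?_ ?_)
    · exact continuous_const.update i₀ continuous_snd
    · exact continuous_const.update i₀
        (continuous_pi fun k => continuous_const.add (continuous_fst.mul continuous_const))
  have hFmin : IsLocalMin (L ∘ Ψ) (0, 0) := by
    apply IsLocalMin.comp_continuous _ hΨc.continuousAt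
    rw [hΨ00]; exact hmin
  have hFmin' : ∀ᶠ q in nhds ((0:ℝ), (0:ℝ)), (L ∘ Ψ) (0, 0) ≤ (L ∘ Ψ) q := hFmin
  obtain ⟨ε, hε, hball⟩ := Metric.eventually_nhds_iff_ball.mp hFmin'
  set G : ℝ → ℝ := fun t => ∑ i, K i * σ (α i + t * β i) with hG
  -- Claim A : G vanishes near 0
  have hGzero : ∀ᶠ t in nhds (0:ℝ), G t = 0 := by
    rw [Metric.eventually_nhds_iff_ball]
    refine ⟨ε, hε, fun t ht => ?_⟩
    set vt : Fin d → ℝ := fun k => w i₀ k + t * u k with hvt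
    have hCt : ∀ i : Fin n,
        (∑ k, Function.update w i₀ vt i₀ k * x i k) = α i + t * β i := by
      intro i
      rw [Function.update_self]
      have h : ∀ k, vt k * x i k = w i₀ k * x i k + t * (u k * x i k) := fun k => by
        simp only [hvt]; ring
      simp_rw [h, Finset.sum_add_distrib, ← Finset.mul_sum]; rfl
    set Fm : ℝ → ℝ := fun s => (1 / (n : ℝ)) * ∑ i, ℓ (-(y i) *
      (a0 + (∑ j, Function.update a i₀ s j *
        σ (∑ k, Function.update w i₀ vt j k * x i k)) + g (x i))) with hFm
    have hFmeq : ∀ s, Fm s = (L ∘ Ψ) (t, s) := fun s => rfl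
    have hF0 : Fm 0 = (L ∘ Ψ) (0, 0) := by
      show Fm 0 = L (Ψ (0, 0))
      rw [hΨ00]
      simp only [hFm, hL, hupda]
      congr 1
      exact Finset.sum_congr rfl fun i _ => by rw [hupd vt i]
    have hmins : IsLocalMin Fm 0 := by
      have : ∀ᶠ s in nhds (0:ℝ), Fm 0 ≤ Fm s := by
        rw [Metric.eventually_nhds_iff_ball]
        refine ⟨ε, hε, fun s hs => ?_⟩
        rw [hF0, hFmeq s]
        refine hball (t, s) ?_
        rw [Metric.mem_ball, Prod.dist_eq]
        exact max_lt (Metric.mem_ball.1 ht) (Metric.mem_ball.1 hs)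
      exact this
    -- derivative of Fm at 0
    have hF' : HasDerivAt Fm
        ((1 / (n : ℝ)) * ∑ i, deriv ℓ (-(y i) * fs i) * (-(y i) * σ (α i + t * β i))) 0 := by
      rw [hFm]
      apply HasDerivAt.const_mul
      apply HasDerivAt.fun_sum
      intro i _
      have hS := hasDerivAt_update_sum a i₀
        (fun j => σ (∑ k, Function.update w i₀ vt j k * x i k)) 0
      rw [hCt i] at hS
      have hin : HasDerivAt (fun s : ℝ => -(y i) * (a0 + (∑ j, Function.update a i₀ s j *
          σ (∑ k, Function.update w i₀ vt j k * x i k)) + g (x i)))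
          (-(y i) * σ (α i + t * β i)) 0 :=
        (((hS.const_add a0).add_const (g (x i))).const_mul (-(y i)))
      have hval : -(y i) * (a0 + (∑ j, Function.update a i₀ (0:ℝ) j *
          σ (∑ k, Function.update w i₀ vt j k * x i k)) + g (x i)) = -(y i) * fs i := by
        rw [hupda, hupd vt i, hfs]
      have := (hℓd _).hasDerivAt.comp 0 hin
      rw [hval] at this
      exact this
    have h0 : (1 / (n : ℝ)) * ∑ i, deriv ℓ (-(y i) * fs i) * (-(y i) * σ (α i + t * β i)) = 0 := by
      rw [← hF'.deriv]; exact hmins.deriv_eq_zero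
    have hsum : ∑ i, deriv ℓ (-(y i) * fs i) * (-(y i) * σ (α i + t * β i)) = 0 :=
      (mul_eq_zero.mp h0).resolve_left hnR
    rw [hG]
    rw [← hsum]
    refine Finset.sum_congr rfl fun i _ => ?_
    rw [hK]; ring
  -- Claim B : second derivative of G at 0
  have hG1 : ∀ t : ℝ, HasDerivAt G (∑ i, K i * (deriv σ (α i + t * β i) * β i)) t := by
    intro t
    rw [hG]
    apply HasDerivAt.fun_sum
    intro i _
    have hlin : HasDerivAt (fun t : ℝ => α i + t * β i) (β i) t := by
      simpa using ((hasDerivAt_id t).mul_const (β i)).const_add (α i)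
    exact ((hσd _).hasDerivAt.comp t hlin).const_mul (K i)
  have hderivG : deriv G = fun t => ∑ i, K i * (deriv σ (α i + t * β i) * β i) :=
    funext fun t => (hG1 t).deriv
  have hG2 : HasDerivAt (deriv G) (∑ i, K i * (deriv (deriv σ) (α i) * β i * β i)) 0 := by
    rw [hderivG]
    apply HasDerivAt.fun_sum
    intro i _
    have hlin : HasDerivAt (fun t : ℝ => α i + t * β i) (β i) 0 := by
      simpa using ((hasDerivAt_id (0:ℝ)).mul_const (β i)).const_add (α i)
    have h := (((hσ'd (α i + 0 * β i)).hasDerivAt.comp 0 hlin).mul_const (β i)).const_mul (K i)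
    simpa [mul_assoc] using h
  -- combine
  have hEq : G =ᶠ[nhds (0:ℝ)] fun _ : ℝ => (0:ℝ) := hGzero
  have hd1 : deriv G =ᶠ[nhds (0:ℝ)] deriv (fun _ : ℝ => (0:ℝ)) := hEq.deriv
  have hd2 : deriv (deriv G) 0 = deriv (deriv (fun _ : ℝ => (0:ℝ))) 0 := hd1.deriv_eq
  have hkey : ∑ i, K i * (deriv (deriv σ) (α i) * β i * β i) = 0 := by
    rw [← hG2.deriv, hd2]
    simp
  have hfinal : ∑ i, deriv ℓ (-(y i) * fs i) * y i * deriv (deriv σ) (α i) * (β i) ^ 2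
      = -∑ i, K i * (deriv (deriv σ) (α i) * β i * β i) := by
    rw [← Finset.sum_neg_distrib]
    refine Finset.sum_congr rfl fun i _ => ?_
    rw [hK]; ring
  calc ∑ i, deriv ℓ (-(y i) * fs i) * y i * deriv (deriv σ) (α i) * (β i) ^ 2
      = -∑ i, K i * (deriv (deriv σ) (α i) * β i * β i) := hfinal
    _ = 0 := by rw [hkey, neg_zero]
end
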